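/- arXiv:1705.09081 — 7 statements merged into one kernel-verified Lean document; each statement's English description precedes it below -/
import Mathlib

section
/- Let t0 < tf be real numbers and n a natural number. Let E : ℝ → Matrix (Fin n) (Fin n) ℝ be continuously differentiable on [t0, tf] and A : ℝ → Matrix (Fin n) (Fin n) ℝ be continuous on [t0, tf], and suppose that for all t ∈ [t0, tf], E(t)ᵀ = E(t) and E'(t) = −(A(t) + A(t)ᵀ). Then for all continuously differentiable functions x₁, x₂ : ℝ → (Fin n → ℝ) with x₁(t0) = x₁(tf) = 0 and x₂(t0) = x₂(tf) = 0, one has ∫_{t0}^{tf} ⟪x₁(t), E(t) ⬝ x₂'(t) − A(t) ⬝ x₂(t)⟫ dt = ∫_{t0}^{tf} ⟪−E(t) ⬝ x₁'(t) + A(t) ⬝ x₁(t), x₂(t)⟫ dt, i.e. the differential-algebraic operator L = E d/dt − A is formally skew-adjoint with respect to the L² inner product. -/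
open Matrix Set

/-- `M'` is the entrywise derivative of the matrix-valued function `M` at `t`. -/
def MatHasDerivAt {α β : Type*} (M M' : ℝ → Matrix α β ℝ) (t : ℝ) : Prop :=
  ∀ i j, HasDerivAt (fun s => M s i j) (M' t i j) t

/-!
By the product rule, `⟪x₁, E x₂⟫` has derivative `⟪x₁', E x₂⟫ + ⟪x₁, E' x₂ + E x₂'⟫`. Moving `E`
and `A` across the inner product with `Eᵀ = E` and `E' = -(A + Aᵀ)` shows that this is exactly the
difference of the two integrands, so the difference of the integrals is `⟪x₁, E x₂⟫` evaluated
between `t0` and `tf`, which vanishes with `x₁`.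
-/

theorem Matrix.mulVec_dotProduct {m n R : Type*} [Fintype m] [Fintype n] [CommSemiring R]
    (M : Matrix m n R) (u : n → R) (w : m → R) : (M *ᵥ u) ⬝ᵥ w = u ⬝ᵥ (Mᵀ *ᵥ w) := by
  rw [dotProduct_mulVec, vecMul_transpose]

theorem dotProduct_sub_dotProduct_eq_of_symm_of_skew {n R : Type*} [Fintype n] [CommRing R]
    {E E' A : Matrix n n R} (x₁ x₂ x₁' x₂' : n → R) (hE : Eᵀ = E) (hE' : E' = -(A + Aᵀ)) :
    x₁ ⬝ᵥ (E *ᵥ x₂' - A *ᵥ x₂) - (-(E *ᵥ x₁') + A *ᵥ x₁) ⬝ᵥ x₂ =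
      x₁' ⬝ᵥ (E *ᵥ x₂) + x₁ ⬝ᵥ (E' *ᵥ x₂ + E *ᵥ x₂') := by
  simp only [add_dotProduct, neg_dotProduct, mulVec_dotProduct, hE, hE', neg_mulVec,
    add_mulVec, dotProduct_sub, dotProduct_neg, dotProduct_add]
  ring

section Calculus

variable {m n : Type*} {t : ℝ}

theorem HasDerivAt.dotProduct [Fintype n] {v w : ℝ → n → ℝ} {v' w' : n → ℝ}
    (hv : HasDerivAt v v' t) (hw : HasDerivAt w w' t) :
    HasDerivAt (fun s => v s ⬝ᵥ w s) (v' ⬝ᵥ w t + v t ⬝ᵥ w') t := by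
  have := HasDerivAt.fun_sum (u := Finset.univ) fun i _ =>
    (hasDerivAt_pi.1 hv i).fun_mul (hasDerivAt_pi.1 hw i)
  simpa only [_root_.dotProduct, Finset.sum_add_distrib] using this

theorem MatHasDerivAt.mulVec [Fintype n] {M M' : ℝ → Matrix m n ℝ} {w : ℝ → n → ℝ} {w' : n → ℝ}
    (hM : MatHasDerivAt M M' t) (hw : HasDerivAt w w' t) :
    HasDerivAt (fun s => M s *ᵥ w s) (M' t *ᵥ w t + M t *ᵥ w') t :=
  hasDerivAt_pi.2 fun i => (hasDerivAt_pi.2 (hM i)).dotProduct hw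

theorem MatHasDerivAt.continuousAt {M M' : ℝ → Matrix m n ℝ} (hM : MatHasDerivAt M M' t) :
    ContinuousAt M t :=
  continuousAt_pi.2 fun i => continuousAt_pi.2 fun j => (hM i j).continuousAt

end Calculus

section Continuity

variable {X m n R : Type*} [TopologicalSpace X] [Fintype n] {s : Set X}
  [TopologicalSpace R] [NonUnitalNonAssocSemiring R] [ContinuousAdd R] [ContinuousMul R]

@[fun_prop]
protected theorem ContinuousOn.dotProduct {v w : X → n → R} (hv : ContinuousOn v s)
    (hw : ContinuousOn w s) : ContinuousOn (fun x => v x ⬝ᵥ w x) s :=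
  (continuous_fst.dotProduct continuous_snd).comp_continuousOn (hv.prodMk hw)

@[fun_prop]
theorem ContinuousOn.matrix_mulVec {M : X → Matrix m n R} {w : X → n → R}
    (hM : ContinuousOn M s) (hw : ContinuousOn w s) : ContinuousOn (fun x => M x *ᵥ w x) s :=
  (continuous_fst.matrix_mulVec continuous_snd).comp_continuousOn (hM.prodMk hw)

end Continuity

/-- A skew-adjoint differential-algebraic operator `L = E d/dt − A` is formally
skew-adjoint with respect to the `L²` inner product on `[t0, tf]`. -/
theorem skewAdjoint_operator_formally_skewAdjoint
    (n : ℕ) (t0 tf : ℝ) (h : t0 < tf)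
    (E E' A : ℝ → Matrix (Fin n) (Fin n) ℝ)
    (hE : ∀ t ∈ Set.Icc t0 tf, MatHasDerivAt E E' t)
    (hE'c : ContinuousOn E' (Set.Icc t0 tf))
    (hAc : ContinuousOn A (Set.Icc t0 tf))
    (hEsym : ∀ t ∈ Set.Icc t0 tf, (E t)ᵀ = E t)
    (hskew : ∀ t ∈ Set.Icc t0 tf, E' t = -(A t + (A t)ᵀ)) :
    ∀ x₁ x₂ x₁' x₂' : ℝ → Fin n → ℝ,
      (∀ t, HasDerivAt x₁ (x₁' t) t) → Continuous x₁' →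
      (∀ t, HasDerivAt x₂ (x₂' t) t) → Continuous x₂' →
      x₁ t0 = 0 → x₁ tf = 0 → x₂ t0 = 0 → x₂ tf = 0 →
      ∫ t in t0..tf, x₁ t ⬝ᵥ (E t *ᵥ x₂' t - A t *ᵥ x₂ t) =
        ∫ t in t0..tf, (-(E t *ᵥ x₁' t) + A t *ᵥ x₁ t) ⬝ᵥ x₂ t := by
  intro x₁ x₂ x₁' x₂' hx₁ hx₁' hx₂ hx₂' hx₁t0 hx₁tf _ _
  rw [← uIcc_of_le h.le] at hE hE'c hAc hEsym hskew
  have hx₁c : ContinuousOn x₁ (uIcc t0 tf) := fun t _ => (hx₁ t).continuousAt.continuousWithinAt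
  have hx₂c : ContinuousOn x₂ (uIcc t0 tf) := fun t _ => (hx₂ t).continuousAt.continuousWithinAt
  have hEc : ContinuousOn E (uIcc t0 tf) := fun t ht =>
    (hE t ht).continuousAt.continuousWithinAt
  have hx₁'c := hx₁'.continuousOn (s := uIcc t0 tf)
  have hx₂'c := hx₂'.continuousOn (s := uIcc t0 tf)
  rw [← sub_eq_zero, ← intervalIntegral.integral_sub
    (ContinuousOn.intervalIntegrable (by fun_prop))
    (ContinuousOn.intervalIntegrable (by fun_prop))]
  have hderiv : ∀ t ∈ uIcc t0 tf, HasDerivAt (fun s => x₁ s ⬝ᵥ (E s *ᵥ x₂ s))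
      (x₁' t ⬝ᵥ (E t *ᵥ x₂ t) + x₁ t ⬝ᵥ (E' t *ᵥ x₂ t + E t *ᵥ x₂' t)) t := fun t ht =>
    (hx₁ t).dotProduct ((hE t ht).mulVec (hx₂ t))
  calc _ = ∫ t in t0..tf, x₁' t ⬝ᵥ (E t *ᵥ x₂ t) + x₁ t ⬝ᵥ (E' t *ᵥ x₂ t + E t *ᵥ x₂' t) :=
        intervalIntegral.integral_congr fun t ht =>
          dotProduct_sub_dotProduct_eq_of_symm_of_skew _ _ _ _ (hEsym t ht) (hskew t ht)
    _ = 0 := by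
        rw [intervalIntegral.integral_eq_sub_of_hasDerivAt hderiv
          (ContinuousOn.intervalIntegrable (by fun_prop))]
        simp [hx₁t0, hx₁tf]
end

section
/- Let E : ℝ → Matrix (Fin n) (Fin n) ℝ be continuously differentiable and A : ℝ → Matrix (Fin n) (Fin n) ℝ be continuous on an interval I, and suppose that for all t ∈ I, E(t)ᵀ = E(t) and E'(t) = −(A(t) + A(t)ᵀ). Let V : ℝ → Matrix (Fin n) (Fin r) ℝ be continuously differentiable on I. Define Ẽ(t) = V(t)ᵀ * E(t) * V(t) and Ã(t) = V(t)ᵀ * A(t) * V(t) − V(t)ᵀ * E(t) * V'(t). Then for all t ∈ I, Ẽ(t)ᵀ = Ẽ(t) and Ẽ'(t) = −(Ã(t) + Ã(t)ᵀ); that is, the congruence-transformed differential-algebraic operator L_V = Ẽ d/dt − Ã is again skew-adjoint. -/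
/-!
By the product rule `(VᵀEV)' = V'ᵀEV + VᵀE'V + VᵀEV'`. Substituting `E' = -(A + Aᵀ)` and using
`Eᵀ = E`, the two outer terms are `(VᵀEV')ᵀ + VᵀEV'`, which is exactly the contribution of the
correction `-VᵀEV'` in `Ã` to `-(Ã + Ãᵀ)`.
-/

open Matrix Set

namespace MatHasDerivAt

variable {l m p : Type*} {t : ℝ}

theorem congr_deriv {M D D' : ℝ → Matrix m p ℝ} (hM : MatHasDerivAt M D t) (h : D t = D' t) :
    MatHasDerivAt M D' t := by
  intro i j
  rw [← h]
  exact hM i j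

theorem transpose {M D : ℝ → Matrix m p ℝ} (hM : MatHasDerivAt M D t) :
    MatHasDerivAt (fun s => (M s)ᵀ) (fun s => (D s)ᵀ) t :=
  fun i j => hM j i

theorem mul [Fintype m] {M M' : ℝ → Matrix l m ℝ} {N N' : ℝ → Matrix m p ℝ}
    (hM : MatHasDerivAt M M' t) (hN : MatHasDerivAt N N' t) :
    MatHasDerivAt (fun s => M s * N s) (fun s => M' s * N s + M s * N' s) t := by
  intro i j
  simp only [Matrix.add_apply, mul_apply, ← Finset.sum_add_distrib]
  exact HasDerivAt.fun_sum fun k _ => (hM i k).fun_mul (hN k j)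

end MatHasDerivAt

namespace Matrix

variable {R : Type*} {m n : Type*} [Fintype n]

theorem IsSymm.transpose_mul_mul [CommSemiring R] {E : Matrix n n R} (hE : E.IsSymm)
    (V : Matrix n m R) : (Vᵀ * E * V).IsSymm := by
  rw [IsSymm, transpose_mul, transpose_mul, transpose_transpose, hE.eq, Matrix.mul_assoc]

theorem transpose_mul_mul_deriv_eq_neg_add_transpose [CommRing R] {E E' A : Matrix n n R}
    {V V' : Matrix n m R} (hE : E.IsSymm) (hskew : E' = -(A + Aᵀ)) :
    (V'ᵀ * E + Vᵀ * E') * V + Vᵀ * E * V' =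
      -((Vᵀ * A * V - Vᵀ * E * V') + (Vᵀ * A * V - Vᵀ * E * V')ᵀ) := by
  simp only [hskew, transpose_sub, transpose_mul, transpose_transpose, hE.eq, Matrix.mul_neg,
    Matrix.neg_mul, Matrix.mul_add, Matrix.add_mul, Matrix.mul_assoc]
  abel

end Matrix

theorem congruence_preserves_skewAdjoint_general
    (n r : ℕ) (I : Set ℝ)
    (E E' A : ℝ → Matrix (Fin n) (Fin n) ℝ)
    (V V' : ℝ → Matrix (Fin n) (Fin r) ℝ)
    (hE : ∀ t ∈ I, MatHasDerivAt E E' t)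
    (hV : ∀ t ∈ I, MatHasDerivAt V V' t)
    (hEsym : ∀ t ∈ I, (E t)ᵀ = E t)
    (hskew : ∀ t ∈ I, E' t = -(A t + (A t)ᵀ)) :
    ∀ t ∈ I,
      ((V t)ᵀ * E t * V t)ᵀ = (V t)ᵀ * E t * V t ∧
      MatHasDerivAt (fun s => (V s)ᵀ * E s * V s)
        (fun s => -(((V s)ᵀ * A s * V s - (V s)ᵀ * E s * V' s) +
          ((V s)ᵀ * A s * V s - (V s)ᵀ * E s * V' s)ᵀ)) t := by
  intro t ht
  have hsymm : (E t).IsSymm := hEsym t ht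
  refine ⟨(hsymm.transpose_mul_mul (V t)).eq, ?_⟩
  exact (((hV t ht).transpose.mul (hE t ht)).mul (hV t ht)).congr_deriv
    (transpose_mul_mul_deriv_eq_neg_add_transpose hsymm (hskew t ht))

/-- Skew-adjoint differential-algebraic operators remain skew-adjoint under
time-varying congruence transformations `Ẽ = VᵀEV`, `Ã = VᵀAV − VᵀEV'`. -/
theorem congruence_preserves_skewAdjoint
    (n r : ℕ) (I : Set ℝ)
    (E E' A : ℝ → Matrix (Fin n) (Fin n) ℝ)
    (V V' : ℝ → Matrix (Fin n) (Fin r) ℝ)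
    (hE : ∀ t ∈ I, MatHasDerivAt E E' t)
    (hE'c : ContinuousOn E' I)
    (hAc : ContinuousOn A I)
    (hV : ∀ t ∈ I, MatHasDerivAt V V' t)
    (hV'c : ContinuousOn V' I)
    (hEsym : ∀ t ∈ I, (E t)ᵀ = E t)
    (hskew : ∀ t ∈ I, E' t = -(A t + (A t)ᵀ)) :
    ∀ t ∈ I,
      ((V t)ᵀ * E t * V t)ᵀ = (V t)ᵀ * E t * V t ∧
      MatHasDerivAt (fun s => (V s)ᵀ * E s * V s)
        (fun s => -(((V s)ᵀ * A s * V s - (V s)ᵀ * E s * V' s) +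
          ((V s)ᵀ * A s * V s - (V s)ᵀ * E s * V' s)ᵀ)) t :=
  congruence_preserves_skewAdjoint_general n r I E E' A V V' hE hV hEsym hskew
end

section
/- Let Q, R : ℝ → Matrix (Fin n) (Fin n) ℝ, P : ℝ → Matrix (Fin n) (Fin m) ℝ, S : ℝ → Matrix (Fin m) (Fin m) ℝ be functions on an interval I, and suppose that for each t ∈ I the block matrix W(t) = [[Q(t)ᵀ*R(t)*Q(t), Q(t)ᵀ*P(t)], [P(t)ᵀ*Q(t), S(t)]] is positive semidefinite. Let U, V : ℝ → Matrix (Fin n) (Fin n) ℝ with U(t) invertible for all t ∈ I, and define Q̃ = U⁻¹*Q*V, R̃ = Uᵀ*R*U, P̃ = Uᵀ*P. Then for each t ∈ I the transformed block matrix W̃(t) = [[Q̃(t)ᵀ*R̃(t)*Q̃(t), Q̃(t)ᵀ*P̃(t)], [P̃(t)ᵀ*Q̃(t), S(t)]] satisfies W̃(t) = diag(V(t), I_m)ᵀ * W(t) * diag(V(t), I_m), and in particular W̃(t) is positive semidefinite. -/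
open Matrix

/-!
Since `U` is invertible, `U` cancels in each block of the transformed dissipation matrix:
`Q̃ᵀR̃Q̃ = VᵀQᵀ(U⁻ᵀUᵀ)R(UU⁻¹)QV = Vᵀ(QᵀRQ)V`, `Q̃ᵀP̃ = Vᵀ(QᵀP)` and `P̃ᵀQ̃ = (PᵀQ)V`.
These are exactly the blocks of the congruence `diag(V, I)ᵀ W diag(V, I)`, and a congruence
preserves nonnegativity of the quadratic form: `zᵀ(MᵀWM)z = (Mz)ᵀW(Mz)`.
-/

namespace Matrix

variable {k l o : Type*} {α : Type*}

section CommSemiring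

variable [CommSemiring α]

theorem dotProduct_transpose_mul_mul_mulVec [Fintype k] [Fintype l]
    (M : Matrix k l α) (W : Matrix k k α) (z : l → α) :
    z ⬝ᵥ (Mᵀ * W * M) *ᵥ z = (M *ᵥ z) ⬝ᵥ W *ᵥ (M *ᵥ z) := by
  rw [← mulVec_mulVec, ← mulVec_mulVec, dotProduct_mulVec, vecMul_transpose]

theorem fromBlocks_transpose_mul_mul_fromBlocks_one [Fintype k] [Fintype o] [DecidableEq o]
    (V : Matrix k k α) (A : Matrix k k α) (B : Matrix k o α) (C : Matrix o k α)
    (D : Matrix o o α) :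
    (fromBlocks V 0 0 (1 : Matrix o o α))ᵀ * fromBlocks A B C D * fromBlocks V 0 0 1 =
      fromBlocks (Vᵀ * A * V) (Vᵀ * B) (C * V) D := by
  simp only [fromBlocks_transpose, fromBlocks_multiply, transpose_zero, transpose_one,
    Matrix.mul_zero, Matrix.zero_mul, Matrix.mul_one, Matrix.one_mul, add_zero, zero_add]

end CommSemiring

section CommRing

variable [CommRing α] [Fintype k] [DecidableEq k]

theorem transpose_nonsing_inv_mul_transpose_cancel_left {U : Matrix k k α} (hU : IsUnit U)
    (B : Matrix k l α) : U⁻¹ᵀ * (Uᵀ * B) = B := by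
  rw [transpose_nonsing_inv, nonsing_inv_mul_cancel_left _ _
    ((isUnit_iff_isUnit_det _).mp (isUnit_transpose _ |>.mpr hU))]

theorem fromBlocks_changeOfBasis_eq_congr [Fintype o] [DecidableEq o] {U : Matrix k k α}
    (hU : IsUnit U) (Q R V : Matrix k k α) (P : Matrix k o α) (S : Matrix o o α) :
    fromBlocks ((U⁻¹ * Q * V)ᵀ * (Uᵀ * R * U) * (U⁻¹ * Q * V)) ((U⁻¹ * Q * V)ᵀ * (Uᵀ * P))
        ((Uᵀ * P)ᵀ * (U⁻¹ * Q * V)) S =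
      (fromBlocks V 0 0 (1 : Matrix o o α))ᵀ * fromBlocks (Qᵀ * R * Q) (Qᵀ * P) (Pᵀ * Q) S *
        fromBlocks V 0 0 1 := by
  rw [fromBlocks_transpose_mul_mul_fromBlocks_one]
  simp only [transpose_mul, Matrix.mul_assoc, transpose_transpose,
    transpose_nonsing_inv_mul_transpose_cancel_left hU,
    mul_nonsing_inv_cancel_left _ _ ((isUnit_iff_isUnit_det _).mp hU)]

end CommRing

end Matrix

/-- The dissipation matrix `W = [[QᵀRQ, QᵀP], [PᵀQ, S]]` transforms by congruence
with `diag(V, I)` under `Q̃ = U⁻¹QV`, `R̃ = UᵀRU`, `P̃ = UᵀP`; in particular positive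
semidefiniteness is preserved. -/
theorem dissipation_matrix_congruence_transform
    (n m : ℕ) (I : Set ℝ)
    (Q R : ℝ → Matrix (Fin n) (Fin n) ℝ)
    (P : ℝ → Matrix (Fin n) (Fin m) ℝ)
    (S : ℝ → Matrix (Fin m) (Fin m) ℝ)
    (hW : ∀ t ∈ I, ∀ z : Fin n ⊕ Fin m → ℝ,
      0 ≤ z ⬝ᵥ (Matrix.fromBlocks ((Q t)ᵀ * R t * Q t) ((Q t)ᵀ * P t)
        ((P t)ᵀ * Q t) (S t)) *ᵥ z)
    (U V : ℝ → Matrix (Fin n) (Fin n) ℝ)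
    (hU : ∀ t ∈ I, IsUnit (U t)) :
    ∀ t ∈ I,
      Matrix.fromBlocks
          (((U t)⁻¹ * Q t * V t)ᵀ * ((U t)ᵀ * R t * U t) * ((U t)⁻¹ * Q t * V t))
          (((U t)⁻¹ * Q t * V t)ᵀ * ((U t)ᵀ * P t))
          (((U t)ᵀ * P t)ᵀ * ((U t)⁻¹ * Q t * V t)) (S t) =
        (Matrix.fromBlocks (V t) 0 0 (1 : Matrix (Fin m) (Fin m) ℝ))ᵀ *
          (Matrix.fromBlocks ((Q t)ᵀ * R t * Q t) ((Q t)ᵀ * P t)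
            ((P t)ᵀ * Q t) (S t)) *
          Matrix.fromBlocks (V t) 0 0 (1 : Matrix (Fin m) (Fin m) ℝ) ∧
      ∀ z : Fin n ⊕ Fin m → ℝ,
        0 ≤ z ⬝ᵥ (Matrix.fromBlocks
          (((U t)⁻¹ * Q t * V t)ᵀ * ((U t)ᵀ * R t * U t) * ((U t)⁻¹ * Q t * V t))
          (((U t)⁻¹ * Q t * V t)ᵀ * ((U t)ᵀ * P t))
          (((U t)ᵀ * P t)ᵀ * ((U t)⁻¹ * Q t * V t)) (S t)) *ᵥ z := by
  intro t ht
  have hcongr := fromBlocks_changeOfBasis_eq_congr (hU t ht) (Q t) (R t) (V t) (P t) (S t)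
  refine ⟨hcongr, fun z => ?_⟩
  rw [hcongr, dotProduct_transpose_mul_mul_mulVec]
  exact hW t ht _
end

section
/- Consider a block-partitioned descriptor system on an interval I with state x = (x₁, x₂) (x₁ : ℝ → ℝ^{n₁} C¹, x₂ : ℝ → ℝ^{n₂} continuous), input u : ℝ → ℝᵐ, and matrix functions E₁₁, Q₁₁, J₁₁, R₁₁, K₁₁ (n₁×n₁), L₁₂ = J₁₂ − R₁₂ (n₁×n₂), L₂₁ = J₂₁ − R₁₂ᵀ (n₂×n₁), L₂₂ = J₂₂ − R₂₂ (n₂×n₂), Q₂₂ (n₂×n₂), K₁₂ (n₁×n₂), B₁, P₁ (n₁×m), B₂, P₂ (n₂×m), satisfying for every t ∈ I: (first block row) E₁₁ ⬝ x₁' = (J₁₁−R₁₁)*Q₁₁ ⬝ x₁ + L₁₂*Q₂₂ ⬝ x₂ − E₁₁*K₁₁ ⬝ x₁ − E₁₁*K₁₂ ⬝ x₂ + (B₁−P₁) ⬝ u; (second block row) 0 = L₂₁*Q₁₁ ⬝ x₁ + L₂₂*Q₂₂ ⬝ x₂ + (B₂−P₂) ⬝ u; the index-one compatibility condition L₁₂(t)*Q₂₂(t)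 − E₁₁(t)*K₁₂(t) = 0; and L₂₂(t)*Q₂₂(t) invertible. Then for all t ∈ I: (a) x₂ is uniquely determined by x₁ and u via x₂(t) = −(L₂₂(t)*Q₂₂(t))⁻¹ ⬝ (L₂₁(t)*Q₁₁(t) ⬝ x₁(t) + (B₂(t)−P₂(t)) ⬝ u(t)); and (b) x₁ satisfies the reduced state equation E₁₁(t) ⬝ x₁'(t) = ((J₁₁(t)−R₁₁(t))*Q₁₁(t) − E₁₁(t)*K₁₁(t)) ⬝ x₁(t) + (B₁(t)−P₁(t)) ⬝ u(t). -/
open Matrix Set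

/-! Invertibility of `L₂₂ Q₂₂` lets the second block row be solved for `x₂`, and the
compatibility condition makes the two `x₂`-terms of the first block row cancel. -/

namespace Matrix

variable {m n k R : Type*} [Fintype n] [CommRing R]

theorem eq_neg_inv_mulVec_of_mulVec_add_eq_zero [DecidableEq n] {A : Matrix n n R}
    (hA : IsUnit A) {x b : n → R} (h : A *ᵥ x + b = 0) : x = -(A⁻¹ *ᵥ b) := by
  have := hA.invertible
  rw [← mulVec_neg]
  exact (inv_mulVec_eq_vec (eq_neg_of_add_eq_zero_left h).symm).symm

theorem add_mulVec_sub_sub_mulVec_add_of_sub_eq_zero [Fintype k] {A C : Matrix m n R}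
    {M N : Matrix m k R} (hMN : M - N = 0) (x : n → R) (y : k → R) (c : m → R) :
    A *ᵥ x + M *ᵥ y - C *ᵥ x - N *ᵥ y + c = (A - C) *ᵥ x + c := by
  obtain rfl := sub_eq_zero.mp hMN
  rw [sub_mulVec]
  abel

end Matrix

theorem index_one_block_reduction_general
    (n₁ n₂ m : ℕ) (I : Set ℝ)
    (E₁₁ Q₁₁ J₁₁ R₁₁ K₁₁ : ℝ → Matrix (Fin n₁) (Fin n₁) ℝ)
    (J₁₂ R₁₂ K₁₂ : ℝ → Matrix (Fin n₁) (Fin n₂) ℝ)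
    (J₂₁ : ℝ → Matrix (Fin n₂) (Fin n₁) ℝ)
    (J₂₂ R₂₂ Q₂₂ : ℝ → Matrix (Fin n₂) (Fin n₂) ℝ)
    (B₁ P₁ : ℝ → Matrix (Fin n₁) (Fin m) ℝ)
    (B₂ P₂ : ℝ → Matrix (Fin n₂) (Fin m) ℝ)
    (u : ℝ → Fin m → ℝ)
    (x₁ x₁' : ℝ → Fin n₁ → ℝ) (x₂ : ℝ → Fin n₂ → ℝ)
    (hrow1 : ∀ t ∈ I, E₁₁ t *ᵥ x₁' t =
      ((J₁₁ t - R₁₁ t) * Q₁₁ t) *ᵥ x₁ t + ((J₁₂ t - R₁₂ t) * Q₂₂ t) *ᵥ x₂ t -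
        (E₁₁ t * K₁₁ t) *ᵥ x₁ t - (E₁₁ t * K₁₂ t) *ᵥ x₂ t + (B₁ t - P₁ t) *ᵥ u t)
    (hrow2 : ∀ t ∈ I, (0 : Fin n₂ → ℝ) =
      ((J₂₁ t - (R₁₂ t)ᵀ) * Q₁₁ t) *ᵥ x₁ t + ((J₂₂ t - R₂₂ t) * Q₂₂ t) *ᵥ x₂ t +
        (B₂ t - P₂ t) *ᵥ u t)
    (hcompat : ∀ t ∈ I, (J₁₂ t - R₁₂ t) * Q₂₂ t - E₁₁ t * K₁₂ t = 0)
    (hinv : ∀ t ∈ I, IsUnit ((J₂₂ t - R₂₂ t) * Q₂₂ t)) :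
    ∀ t ∈ I,
      x₂ t = -(((J₂₂ t - R₂₂ t) * Q₂₂ t)⁻¹ *ᵥ
        (((J₂₁ t - (R₁₂ t)ᵀ) * Q₁₁ t) *ᵥ x₁ t + (B₂ t - P₂ t) *ᵥ u t)) ∧
      E₁₁ t *ᵥ x₁' t =
        ((J₁₁ t - R₁₁ t) * Q₁₁ t - E₁₁ t * K₁₁ t) *ᵥ x₁ t + (B₁ t - P₁ t) *ᵥ u t := by
  intro t ht
  refine ⟨eq_neg_inv_mulVec_of_mulVec_add_eq_zero (hinv t ht) ?_, ?_⟩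
  · rw [← add_assoc, add_comm (_ *ᵥ x₂ t), ← hrow2 t ht]
  · rw [hrow1 t ht]
    exact add_mulVec_sub_sub_mulVec_add_of_sub_eq_zero (hcompat t ht) _ _ _

/-- In a block-partitioned port-Hamiltonian descriptor system of
differentiation-index at most one, the algebraic variable `x₂` is uniquely
determined by `x₁` and `u`, and `x₁` satisfies the reduced state equation. -/
theorem index_one_block_reduction
    (n₁ n₂ m : ℕ) (I : Set ℝ)
    (E₁₁ Q₁₁ J₁₁ R₁₁ K₁₁ : ℝ → Matrix (Fin n₁) (Fin n₁) ℝ)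
    (J₁₂ R₁₂ K₁₂ : ℝ → Matrix (Fin n₁) (Fin n₂) ℝ)
    (J₂₁ : ℝ → Matrix (Fin n₂) (Fin n₁) ℝ)
    (J₂₂ R₂₂ Q₂₂ : ℝ → Matrix (Fin n₂) (Fin n₂) ℝ)
    (B₁ P₁ : ℝ → Matrix (Fin n₁) (Fin m) ℝ)
    (B₂ P₂ : ℝ → Matrix (Fin n₂) (Fin m) ℝ)
    (u : ℝ → Fin m → ℝ)
    (x₁ x₁' : ℝ → Fin n₁ → ℝ) (x₂ : ℝ → Fin n₂ → ℝ)
    (hx₁ : ∀ t ∈ I, HasDerivAt x₁ (x₁' t) t)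
    (hx₁'c : ContinuousOn x₁' I)
    (hx₂c : ContinuousOn x₂ I)
    (hrow1 : ∀ t ∈ I, E₁₁ t *ᵥ x₁' t =
      ((J₁₁ t - R₁₁ t) * Q₁₁ t) *ᵥ x₁ t + ((J₁₂ t - R₁₂ t) * Q₂₂ t) *ᵥ x₂ t -
        (E₁₁ t * K₁₁ t) *ᵥ x₁ t - (E₁₁ t * K₁₂ t) *ᵥ x₂ t + (B₁ t - P₁ t) *ᵥ u t)
    (hrow2 : ∀ t ∈ I, (0 : Fin n₂ → ℝ) =
      ((J₂₁ t - (R₁₂ t)ᵀ) * Q₁₁ t) *ᵥ x₁ t + ((J₂₂ t - R₂₂ t) * Q₂₂ t) *ᵥ x₂ t +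
        (B₂ t - P₂ t) *ᵥ u t)
    (hcompat : ∀ t ∈ I, (J₁₂ t - R₁₂ t) * Q₂₂ t - E₁₁ t * K₁₂ t = 0)
    (hinv : ∀ t ∈ I, IsUnit ((J₂₂ t - R₂₂ t) * Q₂₂ t)) :
    ∀ t ∈ I,
      x₂ t = -(((J₂₂ t - R₂₂ t) * Q₂₂ t)⁻¹ *ᵥ
        (((J₂₁ t - (R₁₂ t)ᵀ) * Q₁₁ t) *ᵥ x₁ t + (B₂ t - P₂ t) *ᵥ u t)) ∧
      E₁₁ t *ᵥ x₁' t =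
        ((J₁₁ t - R₁₁ t) * Q₁₁ t - E₁₁ t * K₁₁ t) *ᵥ x₁ t + (B₁ t - P₁ t) *ᵥ u t :=
  index_one_block_reduction_general n₁ n₂ m I E₁₁ Q₁₁ J₁₁ R₁₁ K₁₁ J₁₂ R₁₂ K₁₂ J₂₁ J₂₂ R₂₂ Q₂₂ B₁ P₁
    B₂ P₂ u x₁ x₁' x₂ hrow1 hrow2 hcompat hinv
end

section
/- With the notation of the block-partitioned index-one system: let L₂₂ = J₂₂ − R₂₂ and Q₂₂ be n₂×n₂ matrices with L₂₂ and Q₂₂ invertible, and suppose x₂ = −Q₂₂⁻¹ * L₂₂⁻¹ ⬝ (L₂₁*Q₁₁ ⬝ x₁ + (B₂−P₂) ⬝ u) with L₂₁ = J₂₁ − R₁₂ᵀ. Define B̂ = B₁ − (1/2)*(J₂₁ᵀ − R₁₂)*L₂₂⁻ᵀ*(B₂+P₂), P̂ = P₁ − (1/2)*(J₂₁ᵀ − R₁₂)*L₂₂⁻ᵀ*(B₂+P₂), Ŝ = S − (1/2)*((B₂+P₂)ᵀ*L₂₂⁻¹*(B₂−P₂) + (B₂−P₂)ᵀ*L₂₂⁻ᵀ*(B₂+P₂)),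 and N̂ = N − (1/2)*((B₂+P₂)ᵀ*L₂₂⁻¹*(B₂−P₂) − (B₂−P₂)ᵀ*L₂₂⁻ᵀ*(B₂+P₂)). Then the output of the full system equals the output of the reduced system: (B₁+P₁)ᵀ*Q₁₁ ⬝ x₁ + (B₂+P₂)ᵀ*Q₂₂ ⬝ x₂ + (S+N) ⬝ u = (B̂+P̂)ᵀ*Q₁₁ ⬝ x₁ + (Ŝ+N̂) ⬝ u. Moreover B̂ − P̂ = B₁ − P₁, and if Sᵀ = S and Nᵀ = −N then Ŝᵀ = Ŝ and N̂ᵀ = −N̂. -/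
open Matrix

/-!
Invertibility of `Q₂₂` cancels it from `(B₂ + P₂)ᵀ Q₂₂ x₂`, leaving
`-(B₂ + P₂)ᵀ L₂₂⁻¹ (L₂₁ Q₁₁ x₁ + (B₂ - P₂) u)`. Since `J₂₁ᵀ - R₁₂ = L₂₁ᵀ`, the `x₁`-term is exactly what
the two halves of the correction in `B̂ + P̂` add up to; with `X = (B₂ + P₂)ᵀ L₂₂⁻¹ (B₂ - P₂)`, the other
summand in `Ŝ` and `N̂` is `Xᵀ`, so `Ŝ + N̂ = S + N - X` absorbs the `u`-term, and `Ŝ`, `N̂` are `S`, `N`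
corrected by the symmetric and skew-symmetric parts of `X`.
-/

section HalfSplitting

variable {𝕜 M : Type*} [Field 𝕜] [CharZero 𝕜] [AddCommGroup M] [Module 𝕜 M]

theorem sub_half_smul_add_sub_half_smul (a b c : M) :
    (a - (1 / 2 : 𝕜) • c) + (b - (1 / 2 : 𝕜) • c) = a + b - c := by
  module

theorem sub_half_smul_add_add_sub_half_smul_sub (s n x y : M) :
    (s - (1 / 2 : 𝕜) • (x + y)) + (n - (1 / 2 : 𝕜) • (x - y)) = s + n - x := by
  module

end HalfSplitting

namespace Matrix

variable {k l m n R : Type*}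

theorem transpose_transpose_mul_mul [CommRing R] [Fintype l] [Fintype m]
    (A : Matrix l k R) (M : Matrix l m R) (C : Matrix m n R) :
    (Aᵀ * M * C)ᵀ = Cᵀ * Mᵀ * A := by
  rw [transpose_mul, transpose_mul, transpose_transpose, Matrix.mul_assoc]

theorem transpose_sub_smul_sub_transpose [CommRing R] {N : Matrix n n R} (hN : Nᵀ = -N)
    (c : R) (X : Matrix n n R) :
    (N - c • (X - Xᵀ))ᵀ = -(N - c • (X - Xᵀ)) := by
  rw [transpose_sub, transpose_smul, transpose_sub, transpose_transpose, hN, ← neg_sub X,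
    smul_neg]
  abel

theorem mul_mul_nonsing_inv_mul [CommRing R] [Fintype n] [DecidableEq n]
    (C : Matrix m n R) {Q : Matrix n n R} (hQ : IsUnit Q) (K : Matrix n l R) :
    C * Q * (Q⁻¹ * K) = C * K := by
  rw [← Matrix.mul_assoc, mul_nonsing_inv_cancel_right Q C ((isUnit_iff_isUnit_det Q).mp hQ)]

end Matrix

theorem index_one_output_reduction_general
    (n₁ n₂ m : ℕ)
    (Q₁₁ : Matrix (Fin n₁) (Fin n₁) ℝ)
    (Q₂₂ L₂₂ : Matrix (Fin n₂) (Fin n₂) ℝ)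
    (R₁₂ : Matrix (Fin n₁) (Fin n₂) ℝ)
    (J₂₁ L₂₁ : Matrix (Fin n₂) (Fin n₁) ℝ)
    (B₁ P₁ : Matrix (Fin n₁) (Fin m) ℝ)
    (B₂ P₂ : Matrix (Fin n₂) (Fin m) ℝ)
    (S N : Matrix (Fin m) (Fin m) ℝ)
    (hL₂₁ : L₂₁ = J₂₁ - R₁₂ᵀ)
    (hQ₂₂inv : IsUnit Q₂₂)
    (Bh Ph : Matrix (Fin n₁) (Fin m) ℝ)
    (Sh Nh : Matrix (Fin m) (Fin m) ℝ)
    (hBh : Bh = B₁ - (1 / 2 : ℝ) • ((J₂₁ᵀ - R₁₂) * (L₂₂⁻¹)ᵀ * (B₂ + P₂)))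
    (hPh : Ph = P₁ - (1 / 2 : ℝ) • ((J₂₁ᵀ - R₁₂) * (L₂₂⁻¹)ᵀ * (B₂ + P₂)))
    (hSh : Sh = S - (1 / 2 : ℝ) • ((B₂ + P₂)ᵀ * L₂₂⁻¹ * (B₂ - P₂) +
      (B₂ - P₂)ᵀ * (L₂₂⁻¹)ᵀ * (B₂ + P₂)))
    (hNh : Nh = N - (1 / 2 : ℝ) • ((B₂ + P₂)ᵀ * L₂₂⁻¹ * (B₂ - P₂) -
      (B₂ - P₂)ᵀ * (L₂₂⁻¹)ᵀ * (B₂ + P₂)))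
    (x₁ : Fin n₁ → ℝ) (u : Fin m → ℝ) (x₂ : Fin n₂ → ℝ)
    (hx₂ : x₂ = -((Q₂₂⁻¹ * L₂₂⁻¹) *ᵥ ((L₂₁ * Q₁₁) *ᵥ x₁ + (B₂ - P₂) *ᵥ u))) :
    ((B₁ + P₁)ᵀ * Q₁₁) *ᵥ x₁ + ((B₂ + P₂)ᵀ * Q₂₂) *ᵥ x₂ + (S + N) *ᵥ u =
      ((Bh + Ph)ᵀ * Q₁₁) *ᵥ x₁ + (Sh + Nh) *ᵥ u ∧
    Bh - Ph = B₁ - P₁ ∧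
    (Sᵀ = S → Nᵀ = -N → Shᵀ = Sh ∧ Nhᵀ = -Nh) := by
  have hL₂₁_transpose : J₂₁ᵀ - R₁₂ = L₂₁ᵀ := by rw [hL₂₁, transpose_sub, transpose_transpose]
  set X := (B₂ + P₂)ᵀ * L₂₂⁻¹ * (B₂ - P₂)
  have hX_transpose : (B₂ - P₂)ᵀ * (L₂₂⁻¹)ᵀ * (B₂ + P₂) = Xᵀ :=
    (transpose_transpose_mul_mul _ _ _).symm
  rw [hL₂₁_transpose] at hBh hPh
  rw [hX_transpose] at hSh hNh
  have hport : Bh + Ph = B₁ + P₁ - ((B₂ + P₂)ᵀ * L₂₂⁻¹ * L₂₁)ᵀ := by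
    rw [hBh, hPh, sub_half_smul_add_sub_half_smul, transpose_transpose_mul_mul]
  have hfeed : Sh + Nh = S + N - X := by
    rw [hSh, hNh, sub_half_smul_add_add_sub_half_smul_sub]
  have halg : ((B₂ + P₂)ᵀ * Q₂₂) *ᵥ x₂ =
      -(((B₂ + P₂)ᵀ * L₂₂⁻¹ * L₂₁ * Q₁₁) *ᵥ x₁ + X *ᵥ u) := by
    rw [hx₂, mulVec_neg, mulVec_mulVec, mul_mul_nonsing_inv_mul _ hQ₂₂inv, mulVec_add,
      mulVec_mulVec, mulVec_mulVec, Matrix.mul_assoc _ L₂₁]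
  refine ⟨?_, by rw [hBh, hPh, sub_sub_sub_cancel_right], fun hS hN => ⟨?_, ?_⟩⟩
  · rw [halg, hport, hfeed, transpose_sub, transpose_transpose, Matrix.sub_mul, sub_mulVec,
      sub_mulVec]
    abel
  · rw [hSh]
    exact IsSymm.sub hS ((isSymm_add_transpose_self X).smul _)
  · rw [hNh]
    exact transpose_sub_smul_sub_transpose hN _ X

/-- Output-reduction step of the index-one reduction theorem: after eliminating
the algebraic variable `x₂`, the output of the full system equals the output of
the reduced system with modified port and feed-through matrices; moreover
`B̂ − P̂ = B₁ − P₁`, and `Ŝ`, `N̂` inherit (skew-)symmetry from `S`, `N`. -/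
theorem index_one_output_reduction
    (n₁ n₂ m : ℕ)
    (Q₁₁ : Matrix (Fin n₁) (Fin n₁) ℝ)
    (Q₂₂ J₂₂ R₂₂ L₂₂ : Matrix (Fin n₂) (Fin n₂) ℝ)
    (R₁₂ : Matrix (Fin n₁) (Fin n₂) ℝ)
    (J₂₁ L₂₁ : Matrix (Fin n₂) (Fin n₁) ℝ)
    (B₁ P₁ : Matrix (Fin n₁) (Fin m) ℝ)
    (B₂ P₂ : Matrix (Fin n₂) (Fin m) ℝ)
    (S N : Matrix (Fin m) (Fin m) ℝ)
    (hL₂₂ : L₂₂ = J₂₂ - R₂₂) (hL₂₁ : L₂₁ = J₂₁ - R₁₂ᵀ)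
    (hL₂₂inv : IsUnit L₂₂) (hQ₂₂inv : IsUnit Q₂₂)
    (Bh Ph : Matrix (Fin n₁) (Fin m) ℝ)
    (Sh Nh : Matrix (Fin m) (Fin m) ℝ)
    (hBh : Bh = B₁ - (1 / 2 : ℝ) • ((J₂₁ᵀ - R₁₂) * (L₂₂⁻¹)ᵀ * (B₂ + P₂)))
    (hPh : Ph = P₁ - (1 / 2 : ℝ) • ((J₂₁ᵀ - R₁₂) * (L₂₂⁻¹)ᵀ * (B₂ + P₂)))
    (hSh : Sh = S - (1 / 2 : ℝ) • ((B₂ + P₂)ᵀ * L₂₂⁻¹ * (B₂ - P₂) +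
      (B₂ - P₂)ᵀ * (L₂₂⁻¹)ᵀ * (B₂ + P₂)))
    (hNh : Nh = N - (1 / 2 : ℝ) • ((B₂ + P₂)ᵀ * L₂₂⁻¹ * (B₂ - P₂) -
      (B₂ - P₂)ᵀ * (L₂₂⁻¹)ᵀ * (B₂ + P₂)))
    (x₁ : Fin n₁ → ℝ) (u : Fin m → ℝ) (x₂ : Fin n₂ → ℝ)
    (hx₂ : x₂ = -((Q₂₂⁻¹ * L₂₂⁻¹) *ᵥ ((L₂₁ * Q₁₁) *ᵥ x₁ + (B₂ - P₂) *ᵥ u))) :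
    ((B₁ + P₁)ᵀ * Q₁₁) *ᵥ x₁ + ((B₂ + P₂)ᵀ * Q₂₂) *ᵥ x₂ + (S + N) *ᵥ u =
      ((Bh + Ph)ᵀ * Q₁₁) *ᵥ x₁ + (Sh + Nh) *ᵥ u ∧
    Bh - Ph = B₁ - P₁ ∧
    (Sᵀ = S → Nᵀ = -N → Shᵀ = Sh ∧ Nhᵀ = -Nh) :=
  index_one_output_reduction_general n₁ n₂ m Q₁₁ Q₂₂ L₂₂ R₁₂ J₂₁ L₂₁ B₁ P₁ B₂ P₂ S N hL₂₁ hQ₂₂inv Bh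
    Ph Sh Nh hBh hPh hSh hNh x₁ u x₂ hx₂
end

section
/- Let E₁₁, Q₁₁, J₁₁, K₁₁ : ℝ → Matrix (Fin n₁) (Fin n₁) ℝ, J₁₂, K₁₂ : ℝ → Matrix (Fin n₁) (Fin n₂) ℝ, J₂₁ : ℝ → Matrix (Fin n₂) (Fin n₁) ℝ, J₂₂, Q₂₂ : ℝ → Matrix (Fin n₂) (Fin n₂) ℝ, with E₁₁, Q₁₁, Q₂₂ C¹ and the others continuous on an interval I. Form the block matrices E = diag(E₁₁, 0), Q = diag(Q₁₁, Q₂₂), J = [[J₁₁, J₁₂],[J₂₁, J₂₂]], K = [[K₁₁, K₁₂],[K₂₁, K₂₂]] (with arbitrary continuous K₂₁, K₂₂), and assume the skew-adjointness conditions Q(t)ᵀ*E(t) = E(t)ᵀ*Q(t) and (d/dt)(Q(t)ᵀ*E(t)) = Q(t)ᵀ*(E(t)*K(t) − J(t)*Q(t)) + (E(t)*K(t) − J(t)*Q(t))ᵀ*Q(t) hold for all t ∈ I. Then for all t ∈ I the following block identities hold: (i) Q₁₁ᵀ*E₁₁ = E₁₁ᵀ*Q₁₁; (ii) (d/dt)(Q₁₁ᵀ*E₁₁)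 = Q₁₁ᵀ*(E₁₁*K₁₁ − J₁₁*Q₁₁) + (E₁₁*K₁₁ − J₁₁*Q₁₁)ᵀ*Q₁₁; (iii) Q₁₁ᵀ*(J₁₂ + J₂₁ᵀ)*Q₂₂ = Q₁₁ᵀ*E₁₁*K₁₂; (iv) Q₂₂ᵀ*J₂₂*Q₂₂ + Q₂₂ᵀ*J₂₂ᵀ*Q₂₂ = 0. In particular, the reduced operator Q₁₁ᵀE₁₁ (d/dt) − Q₁₁ᵀ(J₁₁Q₁₁ − E₁₁K₁₁) is skew-adjoint. -/
/-!
Since `E` and `Q` are block diagonal, `QᵀE = diag(Q₁₁ᵀE₁₁, 0)`, and the right-hand side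
`Qᵀ(EK - JQ) + (EK - JQ)ᵀQ` has the reduced right-hand side as its `(1,1)` block. Comparing the
two sides of the derivative condition block by block gives the reduced condition in the `(1,1)`
block; in the other blocks `QᵀE` is constantly zero, so the corresponding blocks of the
right-hand side vanish.
-/

open Matrix Set

section BlockAlgebra

variable {R : Type*} [CommRing R] {m n : Type*} [Fintype m] [Fintype n]

theorem transpose_fromBlocks_diag_mul_fromBlocks_diag (A C : Matrix m m R) (B D : Matrix n n R) :
    (fromBlocks A 0 0 B)ᵀ * fromBlocks C 0 0 D = fromBlocks (Aᵀ * C) 0 0 (Bᵀ * D) := by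
  simp [fromBlocks_transpose, fromBlocks_multiply]

def skewAdjointRhs {k : Type*} [Fintype k] (Q E J K : Matrix k k R) : Matrix k k R :=
  Qᵀ * (E * K - J * Q) + (E * K - J * Q)ᵀ * Q

theorem skewAdjointRhs_fromBlocks (E₁₁ Q₁₁ J₁₁ K₁₁ : Matrix m m R) (J₁₂ K₁₂ : Matrix m n R)
    (J₂₁ K₂₁ : Matrix n m R) (J₂₂ Q₂₂ K₂₂ : Matrix n n R) :
    skewAdjointRhs (fromBlocks Q₁₁ 0 0 Q₂₂) (fromBlocks E₁₁ 0 0 0)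
        (fromBlocks J₁₁ J₁₂ J₂₁ J₂₂) (fromBlocks K₁₁ K₁₂ K₂₁ K₂₂) =
      fromBlocks (skewAdjointRhs Q₁₁ E₁₁ J₁₁ K₁₁)
        (Q₁₁ᵀ * E₁₁ * K₁₂ - Q₁₁ᵀ * (J₁₂ + J₂₁ᵀ) * Q₂₂)
        (Q₁₁ᵀ * E₁₁ * K₁₂ - Q₁₁ᵀ * (J₁₂ + J₂₁ᵀ) * Q₂₂)ᵀ
        (-(Q₂₂ᵀ * J₂₂ * Q₂₂ + Q₂₂ᵀ * J₂₂ᵀ * Q₂₂)) := by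
  simp only [skewAdjointRhs, sub_eq_add_neg, fromBlocks_transpose, fromBlocks_multiply,
    fromBlocks_neg, fromBlocks_add]
  congr 1 <;>
    simp [Matrix.mul_add, Matrix.add_mul, Matrix.transpose_mul, Matrix.mul_assoc] <;> abel

end BlockAlgebra

theorem matHasDerivAt_const_iff {α β : Type*} (c : Matrix α β ℝ) (M' : ℝ → Matrix α β ℝ)
    (t : ℝ) : MatHasDerivAt (fun _ => c) M' t ↔ M' t = 0 :=
  ⟨fun h => ext fun i j => (h i j).unique (hasDerivAt_const t _),
    fun h i j => by simpa [h] using hasDerivAt_const t (c i j)⟩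

theorem MatHasDerivAt.fromBlocks_iff {l m n o : Type*} {A A' : ℝ → Matrix n l ℝ}
    {B B' : ℝ → Matrix n m ℝ} {C C' : ℝ → Matrix o l ℝ} {D D' : ℝ → Matrix o m ℝ} {t : ℝ} :
    MatHasDerivAt (fun s => fromBlocks (A s) (B s) (C s) (D s))
        (fun s => fromBlocks (A' s) (B' s) (C' s) (D' s)) t ↔
      MatHasDerivAt A A' t ∧ MatHasDerivAt B B' t ∧ MatHasDerivAt C C' t ∧
        MatHasDerivAt D D' t := by
  refine ⟨fun h => ⟨fun i j => h (.inl i) (.inl j), fun i j => h (.inl i) (.inr j),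
    fun i j => h (.inr i) (.inl j), fun i j => h (.inr i) (.inr j)⟩, ?_⟩
  rintro ⟨hA, hB, hC, hD⟩ (i | i) (j | j)
  exacts [hA i j, hB i j, hC i j, hD i j]

theorem block_skewAdjointness_identities_general
    (n₁ n₂ : ℕ) (I : Set ℝ)
    (E₁₁ Q₁₁ J₁₁ K₁₁ : ℝ → Matrix (Fin n₁) (Fin n₁) ℝ)
    (J₁₂ K₁₂ : ℝ → Matrix (Fin n₁) (Fin n₂) ℝ)
    (J₂₁ K₂₁ : ℝ → Matrix (Fin n₂) (Fin n₁) ℝ)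
    (J₂₂ Q₂₂ K₂₂ : ℝ → Matrix (Fin n₂) (Fin n₂) ℝ)
    (Eb Qb Jb Kb : ℝ → Matrix (Fin n₁ ⊕ Fin n₂) (Fin n₁ ⊕ Fin n₂) ℝ)
    (hEb : ∀ t, Eb t = Matrix.fromBlocks (E₁₁ t) 0 0 0)
    (hQb : ∀ t, Qb t = Matrix.fromBlocks (Q₁₁ t) 0 0 (Q₂₂ t))
    (hJb : ∀ t, Jb t = Matrix.fromBlocks (J₁₁ t) (J₁₂ t) (J₂₁ t) (J₂₂ t))
    (hKb : ∀ t, Kb t = Matrix.fromBlocks (K₁₁ t) (K₁₂ t) (K₂₁ t) (K₂₂ t))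
    (hsym : ∀ t ∈ I, (Qb t)ᵀ * Eb t = (Eb t)ᵀ * Qb t)
    (hQE : ∀ t ∈ I,
      MatHasDerivAt (fun s => (Qb s)ᵀ * Eb s)
        (fun s => (Qb s)ᵀ * (Eb s * Kb s - Jb s * Qb s) +
          (Eb s * Kb s - Jb s * Qb s)ᵀ * Qb s) t) :
    ∀ t ∈ I,
      (Q₁₁ t)ᵀ * E₁₁ t = (E₁₁ t)ᵀ * Q₁₁ t ∧
      MatHasDerivAt (fun s => (Q₁₁ s)ᵀ * E₁₁ s)
        (fun s => (Q₁₁ s)ᵀ * (E₁₁ s * K₁₁ s - J₁₁ s * Q₁₁ s) +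
          (E₁₁ s * K₁₁ s - J₁₁ s * Q₁₁ s)ᵀ * Q₁₁ s) t ∧
      (Q₁₁ t)ᵀ * (J₁₂ t + (J₂₁ t)ᵀ) * Q₂₂ t = (Q₁₁ t)ᵀ * E₁₁ t * K₁₂ t ∧
      (Q₂₂ t)ᵀ * J₂₂ t * Q₂₂ t + (Q₂₂ t)ᵀ * (J₂₂ t)ᵀ * Q₂₂ t = 0 := by
  intro t ht
  have hsym₁₁ := hsym t ht
  simp only [hEb, hQb, transpose_fromBlocks_diag_mul_fromBlocks_diag, transpose_zero,
    Matrix.mul_zero, Matrix.zero_mul, fromBlocks_inj] at hsym₁₁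
  have hblocks := hQE t ht
  change MatHasDerivAt _ (fun s => skewAdjointRhs (Qb s) (Eb s) (Jb s) (Kb s)) t at hblocks
  simp only [hEb, hQb, hJb, hKb, transpose_fromBlocks_diag_mul_fromBlocks_diag,
    Matrix.mul_zero, skewAdjointRhs_fromBlocks, MatHasDerivAt.fromBlocks_iff,
    matHasDerivAt_const_iff] at hblocks
  obtain ⟨hderiv₁₁, hoff, -, hdiag₂₂⟩ := hblocks
  exact ⟨hsym₁₁.1, hderiv₁₁, (sub_eq_zero.mp hoff).symm, neg_eq_zero.mp hdiag₂₂⟩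

/-- Reading off the blocks of the skew-adjointness conditions for a
port-Hamiltonian descriptor system with `E = diag(E₁₁, 0)` and
`Q = diag(Q₁₁, Q₂₂)`: the reduced operator in the variable `x₁` is again
skew-adjoint, and the off-diagonal and lower-diagonal identities hold. -/
theorem block_skewAdjointness_identities
    (n₁ n₂ : ℕ) (I : Set ℝ)
    (E₁₁ Q₁₁ J₁₁ K₁₁ : ℝ → Matrix (Fin n₁) (Fin n₁) ℝ)
    (J₁₂ K₁₂ : ℝ → Matrix (Fin n₁) (Fin n₂) ℝ)
    (J₂₁ K₂₁ : ℝ → Matrix (Fin n₂) (Fin n₁) ℝ)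
    (J₂₂ Q₂₂ K₂₂ : ℝ → Matrix (Fin n₂) (Fin n₂) ℝ)
    (E₁₁d Q₁₁d : ℝ → Matrix (Fin n₁) (Fin n₁) ℝ)
    (Q₂₂d : ℝ → Matrix (Fin n₂) (Fin n₂) ℝ)
    (hE₁₁ : ∀ t ∈ I, MatHasDerivAt E₁₁ E₁₁d t) (hE₁₁dc : ContinuousOn E₁₁d I)
    (hQ₁₁ : ∀ t ∈ I, MatHasDerivAt Q₁₁ Q₁₁d t) (hQ₁₁dc : ContinuousOn Q₁₁d I)
    (hQ₂₂ : ∀ t ∈ I, MatHasDerivAt Q₂₂ Q₂₂d t) (hQ₂₂dc : ContinuousOn Q₂₂d I)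
    (hJ₁₁c : ContinuousOn J₁₁ I) (hJ₁₂c : ContinuousOn J₁₂ I)
    (hJ₂₁c : ContinuousOn J₂₁ I) (hJ₂₂c : ContinuousOn J₂₂ I)
    (hK₁₁c : ContinuousOn K₁₁ I) (hK₁₂c : ContinuousOn K₁₂ I)
    (hK₂₁c : ContinuousOn K₂₁ I) (hK₂₂c : ContinuousOn K₂₂ I)
    (Eb Qb Jb Kb : ℝ → Matrix (Fin n₁ ⊕ Fin n₂) (Fin n₁ ⊕ Fin n₂) ℝ)
    (hEb : ∀ t, Eb t = Matrix.fromBlocks (E₁₁ t) 0 0 0)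
    (hQb : ∀ t, Qb t = Matrix.fromBlocks (Q₁₁ t) 0 0 (Q₂₂ t))
    (hJb : ∀ t, Jb t = Matrix.fromBlocks (J₁₁ t) (J₁₂ t) (J₂₁ t) (J₂₂ t))
    (hKb : ∀ t, Kb t = Matrix.fromBlocks (K₁₁ t) (K₁₂ t) (K₂₁ t) (K₂₂ t))
    (hsym : ∀ t ∈ I, (Qb t)ᵀ * Eb t = (Eb t)ᵀ * Qb t)
    (hQE : ∀ t ∈ I,
      MatHasDerivAt (fun s => (Qb s)ᵀ * Eb s)
        (fun s => (Qb s)ᵀ * (Eb s * Kb s - Jb s * Qb s) +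
          (Eb s * Kb s - Jb s * Qb s)ᵀ * Qb s) t) :
    ∀ t ∈ I,
      (Q₁₁ t)ᵀ * E₁₁ t = (E₁₁ t)ᵀ * Q₁₁ t ∧
      MatHasDerivAt (fun s => (Q₁₁ s)ᵀ * E₁₁ s)
        (fun s => (Q₁₁ s)ᵀ * (E₁₁ s * K₁₁ s - J₁₁ s * Q₁₁ s) +
          (E₁₁ s * K₁₁ s - J₁₁ s * Q₁₁ s)ᵀ * Q₁₁ s) t ∧
      (Q₁₁ t)ᵀ * (J₁₂ t + (J₂₁ t)ᵀ) * Q₂₂ t = (Q₁₁ t)ᵀ * E₁₁ t * K₁₂ t ∧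
      (Q₂₂ t)ᵀ * J₂₂ t * Q₂₂ t + (Q₂₂ t)ᵀ * (J₂₂ t)ᵀ * Q₂₂ t = 0 :=
  block_skewAdjointness_identities_general n₁ n₂ I E₁₁ Q₁₁ J₁₁ K₁₁ J₁₂ K₁₂ J₂₁ K₂₁ J₂₂ Q₂₂ K₂₂ Eb Qb
    Jb Kb hEb hQb hJb hKb hsym hQE
end

section
/- Consider the transformed gas-network descriptor system: real matrices M₁ (n₁×n₁), M₂₂ (n₂×n₂), M₂₃ (n₂×n₃), M₃₃ (n₃×n₃), G₁₂ (n₁×n₂), G₁₃ (n₁×n₃), D₂₂ (n₂×n₂), D₂₃ (n₂×n₃), D₃₃ (n₃×n₃), B₂₂ (n₂×m), B₃₂ (n₃×m), an invertible matrix Σ (n₃×n₃), a continuous input u : ℝ → ℝᵐ, and C¹ functions x₁ : ℝ → ℝ^{n₁}, x₂₂ : ℝ → ℝ^{n₂}, x₂₃ : ℝ → ℝ^{n₃}, x₃ : ℝ → ℝ^{n₃} satisfying on an interval I the four block equations: (1) M₁ ⬝ x₁' + G₁₂ ⬝ x₂₂ + G₁₃ ⬝ x₂₃ = 0; (2) M₂₂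 ⬝ x₂₂' + M₂₃ ⬝ x₂₃' − G₁₂ᵀ ⬝ x₁ + D₂₂ ⬝ x₂₂ + D₂₃ ⬝ x₂₃ = B₂₂ ⬝ u; (3) M₂₃ᵀ ⬝ x₂₂' + M₃₃ ⬝ x₂₃' − G₁₃ᵀ ⬝ x₁ + D₂₃ᵀ ⬝ x₂₂ + D₃₃ ⬝ x₂₃ − Σ ⬝ x₃ = B₃₂ ⬝ u; (4) Σ ⬝ x₂₃ = 0. Then for all t ∈ I: x₂₃(t) = 0; the pair (x₁, x₂₂) satisfies the reduced ordinary port-Hamiltonian system M₁ ⬝ x₁' + G₁₂ ⬝ x₂₂ = 0 and M₂₂ ⬝ x₂₂' − G₁₂ᵀ ⬝ x₁ + D₂₂ ⬝ x₂₂ = B₂₂ ⬝ u; and the Lagrange multiplier is uniquely determined by x₃(t) = Σ⁻¹ ⬝ (M₂₃ᵀ ⬝ x₂₂'(t) − G₁₃ᵀ ⬝ x₁(t) + D₂₃ᵀ ⬝ x₂₂(t) − B₃₂ ⬝ u(t)). -/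
open Matrix Set

/-! The constraint `Σ x₂₃ = 0` with `Σ` invertible forces `x₂₃ = 0` on the whole interval, hence
also `x₂₃' = 0` there (a one-sided derivative at the endpoints suffices, since `[t0, tf]` is a set
of unique differentiability). Substituting both into the block equations leaves the reduced system,
and the third block equation becomes `Σ x₃ = …`, which is solved by `Σ⁻¹`. -/

theorem Matrix.eq_inv_mulVec_of_mulVec_eq {n R : Type*} [Fintype n] [DecidableEq n] [CommRing R]
    {A : Matrix n n R} (hA : IsUnit A) {x y : n → R} (h : A *ᵥ x = y) : x = A⁻¹ *ᵥ y := by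
  rw [← h, mulVec_mulVec, nonsing_inv_mul A ((isUnit_iff_isUnit_det A).mp hA), one_mulVec]

theorem HasDerivWithinAt.eq_zero_of_eqOn_zero {E : Type*} [NormedAddCommGroup E]
    [NormedSpace ℝ E] {f : ℝ → E} {f' : E} {s : Set ℝ} {t : ℝ}
    (hf : HasDerivWithinAt f f' s t) (hs : UniqueDiffWithinAt ℝ s t) (ht : t ∈ s)
    (h0 : EqOn f 0 s) : f' = 0 :=
  hs.eq_deriv s (hf.congr_of_mem (fun _ hy => (h0 hy).symm) ht) (hasDerivWithinAt_const t s 0)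

theorem gas_network_pHDAE_regularization_general
    (n₁ n₂ n₃ m : ℕ) (t0 tf : ℝ) (htf : t0 < tf)
    (M₁ : Matrix (Fin n₁) (Fin n₁) ℝ)
    (M₂₂ : Matrix (Fin n₂) (Fin n₂) ℝ)
    (M₂₃ : Matrix (Fin n₂) (Fin n₃) ℝ)
    (M₃₃ : Matrix (Fin n₃) (Fin n₃) ℝ)
    (G₁₂ : Matrix (Fin n₁) (Fin n₂) ℝ)
    (G₁₃ : Matrix (Fin n₁) (Fin n₃) ℝ)
    (D₂₂ : Matrix (Fin n₂) (Fin n₂) ℝ)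
    (D₂₃ : Matrix (Fin n₂) (Fin n₃) ℝ)
    (D₃₃ : Matrix (Fin n₃) (Fin n₃) ℝ)
    (B₂₂ : Matrix (Fin n₂) (Fin m) ℝ)
    (B₃₂ : Matrix (Fin n₃) (Fin m) ℝ)
    (Sig : Matrix (Fin n₃) (Fin n₃) ℝ) (hSig : IsUnit Sig)
    (u : ℝ → Fin m → ℝ)
    (x₁ x₁' : ℝ → Fin n₁ → ℝ)
    (x₂₂ x₂₂' : ℝ → Fin n₂ → ℝ)
    (x₂₃ x₂₃' : ℝ → Fin n₃ → ℝ)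
    (x₃ : ℝ → Fin n₃ → ℝ)
    (hx₂₃ : ∀ t ∈ Set.Icc t0 tf, HasDerivAt x₂₃ (x₂₃' t) t)
    (heq1 : ∀ t ∈ Set.Icc t0 tf,
      M₁ *ᵥ x₁' t + G₁₂ *ᵥ x₂₂ t + G₁₃ *ᵥ x₂₃ t = 0)
    (heq2 : ∀ t ∈ Set.Icc t0 tf,
      M₂₂ *ᵥ x₂₂' t + M₂₃ *ᵥ x₂₃' t - G₁₂ᵀ *ᵥ x₁ t + D₂₂ *ᵥ x₂₂ t +
        D₂₃ *ᵥ x₂₃ t = B₂₂ *ᵥ u t)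
    (heq3 : ∀ t ∈ Set.Icc t0 tf,
      M₂₃ᵀ *ᵥ x₂₂' t + M₃₃ *ᵥ x₂₃' t - G₁₃ᵀ *ᵥ x₁ t + D₂₃ᵀ *ᵥ x₂₂ t +
        D₃₃ *ᵥ x₂₃ t - Sig *ᵥ x₃ t = B₃₂ *ᵥ u t)
    (heq4 : ∀ t ∈ Set.Icc t0 tf, Sig *ᵥ x₂₃ t = 0) :
    ∀ t ∈ Set.Icc t0 tf,
      x₂₃ t = 0 ∧
      M₁ *ᵥ x₁' t + G₁₂ *ᵥ x₂₂ t = 0 ∧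
      M₂₂ *ᵥ x₂₂' t - G₁₂ᵀ *ᵥ x₁ t + D₂₂ *ᵥ x₂₂ t = B₂₂ *ᵥ u t ∧
      x₃ t = Sig⁻¹ *ᵥ (M₂₃ᵀ *ᵥ x₂₂' t - G₁₃ᵀ *ᵥ x₁ t + D₂₃ᵀ *ᵥ x₂₂ t -
        B₃₂ *ᵥ u t) := by
  have hz : EqOn x₂₃ 0 (Icc t0 tf) := fun t ht =>
    mulVec_injective_iff_isUnit.2 hSig (by rw [heq4 t ht, Pi.zero_apply, mulVec_zero])
  intro t ht
  have hz' : x₂₃' t = 0 :=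
    (hx₂₃ t ht).hasDerivWithinAt.eq_zero_of_eqOn_zero (uniqueDiffOn_Icc htf t ht) ht hz
  have h1 := heq1 t ht
  have h2 := heq2 t ht
  have h3 := heq3 t ht
  rw [hz ht, Pi.zero_apply] at h1 h2 h3 ⊢
  rw [hz'] at h2 h3
  simp only [mulVec_zero, add_zero] at h1 h2 h3
  refine ⟨rfl, h1, h2, eq_inv_mulVec_of_mulVec_eq hSig ?_⟩
  rw [← h3]
  abel

/-- Regularization of the semidiscretized gas-network port-Hamiltonian
descriptor system: the hidden index-two constraint forces `x₂₃ = 0`, the pair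
`(x₁, x₂₂)` solves the reduced implicit ordinary pH system, and the Lagrange
multiplier `x₃` is uniquely determined by the implicit index-one constraint. -/
theorem gas_network_pHDAE_regularization
    (n₁ n₂ n₃ m : ℕ) (t0 tf : ℝ) (htf : t0 < tf)
    (M₁ : Matrix (Fin n₁) (Fin n₁) ℝ)
    (M₂₂ : Matrix (Fin n₂) (Fin n₂) ℝ)
    (M₂₃ : Matrix (Fin n₂) (Fin n₃) ℝ)
    (M₃₃ : Matrix (Fin n₃) (Fin n₃) ℝ)
    (G₁₂ : Matrix (Fin n₁) (Fin n₂) ℝ)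
    (G₁₃ : Matrix (Fin n₁) (Fin n₃) ℝ)
    (D₂₂ : Matrix (Fin n₂) (Fin n₂) ℝ)
    (D₂₃ : Matrix (Fin n₂) (Fin n₃) ℝ)
    (D₃₃ : Matrix (Fin n₃) (Fin n₃) ℝ)
    (B₂₂ : Matrix (Fin n₂) (Fin m) ℝ)
    (B₃₂ : Matrix (Fin n₃) (Fin m) ℝ)
    (Sig : Matrix (Fin n₃) (Fin n₃) ℝ) (hSig : IsUnit Sig)
    (u : ℝ → Fin m → ℝ) (huc : ContinuousOn u (Set.Icc t0 tf))
    (x₁ x₁' : ℝ → Fin n₁ → ℝ)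
    (x₂₂ x₂₂' : ℝ → Fin n₂ → ℝ)
    (x₂₃ x₂₃' : ℝ → Fin n₃ → ℝ)
    (x₃ : ℝ → Fin n₃ → ℝ)
    (hx₁ : ∀ t ∈ Set.Icc t0 tf, HasDerivAt x₁ (x₁' t) t)
    (hx₁'c : ContinuousOn x₁' (Set.Icc t0 tf))
    (hx₂₂ : ∀ t ∈ Set.Icc t0 tf, HasDerivAt x₂₂ (x₂₂' t) t)
    (hx₂₂'c : ContinuousOn x₂₂' (Set.Icc t0 tf))
    (hx₂₃ : ∀ t ∈ Set.Icc t0 tf, HasDerivAt x₂₃ (x₂₃' t) t)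
    (hx₂₃'c : ContinuousOn x₂₃' (Set.Icc t0 tf))
    (heq1 : ∀ t ∈ Set.Icc t0 tf,
      M₁ *ᵥ x₁' t + G₁₂ *ᵥ x₂₂ t + G₁₃ *ᵥ x₂₃ t = 0)
    (heq2 : ∀ t ∈ Set.Icc t0 tf,
      M₂₂ *ᵥ x₂₂' t + M₂₃ *ᵥ x₂₃' t - G₁₂ᵀ *ᵥ x₁ t + D₂₂ *ᵥ x₂₂ t +
        D₂₃ *ᵥ x₂₃ t = B₂₂ *ᵥ u t)
    (heq3 : ∀ t ∈ Set.Icc t0 tf,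
      M₂₃ᵀ *ᵥ x₂₂' t + M₃₃ *ᵥ x₂₃' t - G₁₃ᵀ *ᵥ x₁ t + D₂₃ᵀ *ᵥ x₂₂ t +
        D₃₃ *ᵥ x₂₃ t - Sig *ᵥ x₃ t = B₃₂ *ᵥ u t)
    (heq4 : ∀ t ∈ Set.Icc t0 tf, Sig *ᵥ x₂₃ t = 0) :
    ∀ t ∈ Set.Icc t0 tf,
      x₂₃ t = 0 ∧
      M₁ *ᵥ x₁' t + G₁₂ *ᵥ x₂₂ t = 0 ∧
      M₂₂ *ᵥ x₂₂' t - G₁₂ᵀ *ᵥ x₁ t + D₂₂ *ᵥ x₂₂ t = B₂₂ *ᵥ u t ∧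
      x₃ t = Sig⁻¹ *ᵥ (M₂₃ᵀ *ᵥ x₂₂' t - G₁₃ᵀ *ᵥ x₁ t + D₂₃ᵀ *ᵥ x₂₂ t -
        B₃₂ *ᵥ u t) :=
  gas_network_pHDAE_regularization_general n₁ n₂ n₃ m t0 tf htf M₁ M₂₂ M₂₃ M₃₃ G₁₂ G₁₃ D₂₂ D₂₃ D₃₃
    B₂₂ B₃₂ Sig hSig u x₁ x₁' x₂₂ x₂₂' x₂₃ x₂₃' x₃ hx₂₃ heq1 heq2 heq3 heq4
end
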